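/- Let N ≥ 1, t ≥ 1, and let D be a probability distribution on nonempty subsets of [N]. Define ρ_Haar^{(t)} := Π_{Sym^t([N])} / C(N+t−1, t) and ρ_D^{Haar} := E_{S∼D}[ Π_{Sym^t(S)} / C(|S|+t−1, t) ], where Π_{Sym^t(S)} is the orthogonal projector onto Sym^t(S). Then ρ_Haar^{(t)} and ρ_D^{Haar} commute, and ‖ ρ_Haar^{(t)} − ρ_D^{Haar} ‖₁ = ∑_θ | C(N+t−1,t)^{−1} − E_{S∼D}[ 1[supp(θ) ⊆ S] · C(|S|+t−1,t)^{−1} ] |, where the sum ranges over all multisets θ of size t over [N] (equivalently, functions θ : [N] → ℕ with ∑_i θ(i) = t) and supp(θ) := { i ∈ [N] : θ(i) > 0 }. -/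

import Mathlib

open scoped BigOperators ComplexOrder

namespace DT

noncomputable section

abbrev Bits (k : ℕ) := Fin k → Bool

/-- Trace norm of a complex square matrix: the sum of its singular values,
computed as the trace of `√(Xᴴ X)`. -/
def traceNorm {ι : Type*} [Fintype ι] [DecidableEq ι] (X : Matrix ι ι ℂ) : ℝ :=
  (((Matrix.posSemidef_conjTranspose_mul_self X).1.eigenvectorUnitary : Matrix ι ι ℂ) *
      Matrix.diagonal (((↑) : ℝ → ℂ) ∘ (√·) ∘ (Matrix.posSemidef_conjTranspose_mul_self X).1.eigenvalues) *
      (star (Matrix.posSemidef_conjTranspose_mul_self X).1.eigenvectorUnitary : Matrix ι ι ℂ)).trace.re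

/-- `t`-fold tensor (Kronecker) power of a square matrix. -/
def tpow {ι : Type*} (t : ℕ) (M : Matrix ι ι ℂ) : Matrix (Fin t → ι) (Fin t → ι) ℂ :=
  Matrix.of fun x y => ∏ i, M (x i) (y i)

/-- Outer product `|ψ⟩⟨ψ|`. -/
def outer {ι : Type*} (ψ : ι → ℂ) : Matrix ι ι ℂ :=
  Matrix.of fun x y => ψ x * (starRingEnd ℂ) (ψ y)

/-- Orthogonal projector onto the symmetric subspace of `(ℂ^ι)^{⊗ t}`. -/
def symProj (ι : Type*) [DecidableEq ι] (t : ℕ) : Matrix (Fin t → ι) (Fin t → ι) ℂ :=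
  (t.factorial : ℂ)⁻¹ • ∑ σ : Equiv.Perm (Fin t),
    Matrix.of fun x y => if x = y ∘ σ then (1 : ℂ) else 0

/-- `t`-th moment operator of a Haar random state on `ℂ^ι`. -/
def haarMoment (ι : Type*) [Fintype ι] [DecidableEq ι] (t : ℕ) :
    Matrix (Fin t → ι) (Fin t → ι) ℂ :=
  ((Fintype.card ι + t - 1).choose t : ℂ)⁻¹ • symProj ι t

/-- Orthogonal projector onto `Sym^t(S)`, the symmetric subspace of `t` copies of
the span of the computational basis vectors indexed by `S`. -/
def symProjOn {ι : Type*} [DecidableEq ι] (S : Finset ι) (t : ℕ) :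
    Matrix (Fin t → ι) (Fin t → ι) ℂ :=
  (t.factorial : ℂ)⁻¹ • ∑ σ : Equiv.Perm (Fin t),
    Matrix.of fun x y => if (∀ i, x i ∈ S) ∧ x = y ∘ σ then (1 : ℂ) else 0

/-- `(-1)^v` for a bit `v`. -/
def sgn (v : Bool) : ℂ := if v then -1 else 1

/-- Subset-phase state. -/
def subsetPhase {ι : Type*} [DecidableEq ι] (S : Finset ι) (f : ι → Bool) : ι → ℂ :=
  fun x => if x ∈ S then sgn (f x) / (Real.sqrt S.card : ℂ) else 0

/-- Subset state. -/
def subsetState {ι : Type*} [DecidableEq ι] (S : Finset ι) : ι → ℂ :=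
  subsetPhase S fun _ => false

/-- `S` is a Schmidt-patch (glued) subset: a disjoint union of `R` products of
pairwise disjoint `M`-element subsets. -/
def IsPatch {X Y : Type*} [DecidableEq X] [DecidableEq Y] (M R : ℕ) (S : Finset (X × Y)) : Prop :=
  ∃ (A : Fin R → Finset X) (B : Fin R → Finset Y),
    (∀ j, (A j).card = M) ∧ (∀ j, (B j).card = M) ∧
      (∀ i j, i ≠ j → Disjoint (A i) (A j)) ∧
      (∀ i j, i ≠ j → Disjoint (B i) (B j)) ∧
      S = Finset.univ.biUnion fun j => A j ×ˢ B j

open Classical in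
/-- The family `F_{M,R}` of Schmidt-patch subsets of `X × Y`. -/
def patchFamily (X Y : Type*) [Fintype X] [Fintype Y] [DecidableEq X] [DecidableEq Y]
    (M R : ℕ) : Finset (Finset (X × Y)) :=
  Finset.univ.filter fun S => IsPatch M R S

/-- The graph on the edges of `P` relating edges sharing a left or right endpoint;
its connected components are the bipartite components of `P`. -/
def compGraph {X Y : Type*} (P : Finset (X × Y)) : SimpleGraph {e : X × Y // e ∈ P} :=
  SimpleGraph.fromRel fun e e' => (e : X × Y).1 = (e' : X × Y).1 ∨ (e : X × Y).2 = (e' : X × Y).2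

/-- Number of bipartite components (connected components containing at least one edge). -/
def numComponents {X Y : Type*} (P : Finset (X × Y)) : ℕ :=
  Nat.card (compGraph P).ConnectedComponent

/-- Number of vertices incident to at least one edge of `P` (total unique half-strings). -/
def numVerts {X Y : Type*} [DecidableEq X] [DecidableEq Y] (P : Finset (X × Y)) : ℕ :=
  (P.image Prod.fst).card + (P.image Prod.snd).card

/-- A doubly-unique subset of `X × Y`: all first coordinates are pairwise distinct and
all second coordinates are pairwise distinct. -/
def DoublyUnique {X Y : Type*} (T : Finset (X × Y)) : Prop :=
  (∀ e ∈ T, ∀ e' ∈ T, Prod.fst e = Prod.fst e' → e = e') ∧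
    (∀ e ∈ T, ∀ e' ∈ T, Prod.snd e = Prod.snd e' → e = e')

/-- Cyclic predecessor on `Fin m`. -/
def cpred {m : ℕ} (i : Fin m) : Fin m := ⟨((i : ℕ) + (m - 1)) % m, Nat.mod_lt _ i.pos⟩

/-- Large-brick phase state on `n = 2·m·b` qubits.  The `2m` blocks of `b` bits are indexed by
`Fin m × Bool`, where `(i, false)` is block `x_{2i+1}` and `(i, true)` is block `x_{2i+2}`
of the paper; `f i` acts on blocks `(x_{2i+1}, x_{2i+2})` and `g i` acts on the preceding
overlapping pair of blocks (cyclically). -/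
def lbps (m b : ℕ) (f g : Fin m → (Bits b × Bits b) → Bool) :
    ((Fin m × Bool) → Bits b) → ℂ :=
  fun x =>
    ((∏ i : Fin m, sgn (f i (x (i, false), x (i, true)))) *
        ∏ i : Fin m, sgn (g i (x (cpred i, true), x (i, false)))) /
      (Real.sqrt (2 ^ (2 * m * b)) : ℂ)

/-- Combine retained bits `a` (on positions `P p`) and measured bits `β` into full blocks. -/
def combine {m b : ℕ} (P : Fin m × Bool → Finset (Fin b))
    (a : ∀ p, {r : Fin b // r ∈ P p} → Bool)
    (β : ∀ p, {r : Fin b // r ∉ P p} → Bool) : (Fin m × Bool) → Bits b :=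
  fun p r => if h : r ∈ P p then a p ⟨r, h⟩ else β p ⟨r, h⟩

/-- Normalized post-measurement state of a large-brick phase state on the retained positions,
for measurement outcome `β`: a brickwork phase state with restricted brick functions. -/
def postState (m b : ℕ) (f g : Fin m → (Bits b × Bits b) → Bool)
    (P : Fin m × Bool → Finset (Fin b))
    (β : ∀ p, {r : Fin b // r ∉ P p} → Bool) :
    (∀ p, {r : Fin b // r ∈ P p} → Bool) → ℂ :=
  fun a =>
    ((∏ i : Fin m, sgn (f i (combine P a β (i, false), combine P a β (i, true)))) *
        ∏ i : Fin m, sgn (g i (combine P a β (cpred i, true), combine P a β (i, false)))) /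
      (Real.sqrt (2 ^ (∑ p : Fin m × Bool, (P p).card)) : ℂ)

/-- Reduced density matrix on the first factor of a pure state on `X × Y`. -/
def reducedProd {X Y : Type*} [Fintype Y] (ψ : X × Y → ℂ) : Matrix X X ℂ :=
  Matrix.of fun x x' => ∑ y, ψ (x, y) * (starRingEnd ℂ) (ψ (x', y))

/-- Reduced density matrix of a multi-qubit pure state on the qubits in `A`. -/
def reducedOn {Q : Type*} [Fintype Q] [DecidableEq Q] (A : Finset Q)
    (ψ : (Q → Bool) → ℂ) :
    Matrix ({q : Q // q ∈ A} → Bool) ({q : Q // q ∈ A} → Bool) ℂ :=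
  Matrix.of fun a a' => ∑ c : {q : Q // q ∉ A} → Bool,
    ψ (fun q => if h : q ∈ A then a ⟨q, h⟩ else c ⟨q, h⟩) *
      (starRingEnd ℂ) (ψ fun q => if h : q ∈ A then a' ⟨q, h⟩ else c ⟨q, h⟩)

/-- Ring position of a qubit of a large-brick state: qubit `r` of block `(i, s)`. -/
def qpos (m b : ℕ) (q : (Fin m × Bool) × Fin b) : ℕ :=
  (2 * (q.1.1 : ℕ) + if q.1.2 then 1 else 0) * b + (q.2 : ℕ)

/-- `A` is a contiguous arc of qubits with respect to the ring order on the `n = 2mb` qubits. -/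
def IsArc (m b : ℕ) (A : Finset ((Fin m × Bool) × Fin b)) : Prop :=
  ∃ s len : ℕ, ∀ q, q ∈ A ↔ ∃ j < len, qpos m b q % (2 * m * b) = (s + j) % (2 * m * b)

/-- Schmidt-patch subset-phase state determined by patches `A_j × B_j` and phase function `f`. -/
def spState {X Y : Type*} [DecidableEq X] [DecidableEq Y] (R M : ℕ)
    (A : Fin R → Finset X) (B : Fin R → Finset Y)
    (f : X × Y → Bool) : X × Y → ℂ :=
  fun e => if ∃ j, e.1 ∈ A j ∧ e.2 ∈ B j then sgn (f e) / ((M : ℂ) * (Real.sqrt R : ℂ)) else 0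

namespace Aux
open Matrix Finset

variable {N t : ℕ}

def typeOf (x : Fin t → Fin N) : Sym (Fin N) t :=
  ⟨Multiset.map x Finset.univ.val, by simp⟩

def cnt (x y : Fin t → Fin N) : ℕ :=
  (Finset.univ.filter fun σ : Equiv.Perm (Fin t) => x = y ∘ σ).card

lemma cnt_eq_sum (x y : Fin t → Fin N) :
    cnt x y = ∑ σ : Equiv.Perm (Fin t), if x = y ∘ σ then 1 else 0 := by
  rw [cnt, Finset.card_filter]

lemma typeOf_comp (y : Fin t → Fin N) (σ : Equiv.Perm (Fin t)) :
    typeOf (y ∘ σ) = typeOf y := by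
  apply Subtype.ext
  show Multiset.map (y ∘ σ) Finset.univ.val = Multiset.map y Finset.univ.val
  rw [← Multiset.map_map]
  congr 1
  have : (Finset.univ.map σ.toEmbedding).val = Finset.univ.val := by
    rw [Finset.map_univ_equiv]
  simpa using this

lemma cnt_eq_zero {x y : Fin t → Fin N} (h : typeOf x ≠ typeOf y) : cnt x y = 0 := by
  rw [cnt, Finset.card_eq_zero, Finset.filter_eq_empty_iff]
  intro σ _ hσ
  exact h (hσ ▸ typeOf_comp y σ)

lemma cnt_symm (x y : Fin t → Fin N) : cnt x y = cnt y x := by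
  rw [cnt_eq_sum, cnt_eq_sum]
  refine Fintype.sum_equiv (Equiv.inv _) _ _ fun σ => ?_
  refine if_congr ?_ rfl rfl
  constructor
  · intro h; funext i; rw [h]; simp
  · intro h; funext i; rw [h]; simp

lemma exists_perm {x y : Fin t → Fin N} (h : typeOf x = typeOf y) : ∃ σ : Equiv.Perm (Fin t), x = y ∘ σ := by
  have hcount : ∀ a : Fin N, Fintype.card {i // x i = a} = Fintype.card {i // y i = a} := by
    intro a
    have hm : Multiset.map x Finset.univ.val = Multiset.map y Finset.univ.val :=
      congrArg Subtype.val h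
    have hc := congrArg (Multiset.count a) hm
    rw [Multiset.count_map, Multiset.count_map] at hc
    have e1 : Fintype.card {i // x i = a} =
        Multiset.card (Finset.univ.val.filter fun i => a = x i) := by
      rw [Fintype.card_subtype]
      rw [show (Finset.univ.filter fun i => x i = a).card
        = Multiset.card ((Finset.univ.filter fun i => x i = a)).val from rfl]
      rw [Finset.filter_val]
      congr 1
      exact Multiset.filter_congr (fun i _ => by constructor <;> exact Eq.symm)
    have e2 : Fintype.card {i // y i = a} =
        Multiset.card (Finset.univ.val.filter fun i => a = y i) := by
      rw [Fintype.card_subtype]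
      rw [show (Finset.univ.filter fun i => y i = a).card
        = Multiset.card ((Finset.univ.filter fun i => y i = a)).val from rfl]
      rw [Finset.filter_val]
      congr 1
      exact Multiset.filter_congr (fun i _ => by constructor <;> exact Eq.symm)
    rw [e1, e2, hc]
  let e : ∀ a : Fin N, {i // x i = a} ≃ {i // y i = a} := fun a =>
    Fintype.equivOfCardEq (hcount a)
  refine ⟨Equiv.ofFiberEquiv e, funext fun i => ?_⟩
  exact (Equiv.ofFiberEquiv_map e i).symm

lemma cnt_diag {x y : Fin t → Fin N} (h : typeOf x = typeOf y) : cnt x y = cnt x x := by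
  obtain ⟨τ, hτ⟩ := exists_perm h
  rw [cnt_eq_sum, cnt_eq_sum]
  refine Fintype.sum_equiv (Equiv.mulLeft τ⁻¹) _ _ fun σ => ?_
  refine if_congr ?_ rfl rfl
  show x = y ∘ ⇑σ ↔ x = x ∘ ⇑((Equiv.mulLeft τ⁻¹) σ)
  have : x ∘ ⇑((Equiv.mulLeft τ⁻¹) σ) = y ∘ ⇑σ := by
    funext i
    have := congrFun hτ (τ⁻¹ (σ i))
    simpa [Equiv.Perm.mul_apply] using this
  rw [this]

lemma cnt_rowsum (y : Fin t → Fin N) : ∑ z : Fin t → Fin N, cnt z y = t.factorial := by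
  simp only [cnt_eq_sum]
  rw [Finset.sum_comm]
  have : ∀ σ : Equiv.Perm (Fin t),
      (∑ z : Fin t → Fin N, if z = y ∘ σ then (1:ℕ) else 0) = 1 := by
    intro σ
    simp
  rw [Finset.sum_congr rfl fun σ _ => this σ, Finset.sum_const, smul_eq_mul, mul_one,
    Finset.card_univ, Fintype.card_perm, Fintype.card_fin]

lemma cnt_conv (x y : Fin t → Fin N) :
    ∑ z : Fin t → Fin N, cnt x z * cnt z y = t.factorial * cnt x y := by
  simp only [cnt_eq_sum, Finset.sum_mul_sum]
  rw [Finset.sum_comm]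
  have step : ∀ σ : Equiv.Perm (Fin t),
      (∑ z : Fin t → Fin N, ∑ τ : Equiv.Perm (Fin t),
        (if x = z ∘ σ then (1:ℕ) else 0) * (if z = y ∘ τ then 1 else 0)) =
      cnt x y := by
    intro σ
    rw [Finset.sum_comm]
    have inner : ∀ τ : Equiv.Perm (Fin t),
        (∑ z : Fin t → Fin N,
          (if x = z ∘ σ then (1:ℕ) else 0) * (if z = y ∘ τ then 1 else 0)) =
        if x = y ∘ ⇑(τ * σ) then 1 else 0 := by
      intro τ
      have : ∀ z : Fin t → Fin N,
          (if x = z ∘ σ then (1:ℕ) else 0) * (if z = y ∘ τ then 1 else 0) =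
          if z = y ∘ τ then (if x = z ∘ σ then 1 else 0) else 0 := by
        intro z; split <;> simp
      rw [Finset.sum_congr rfl fun z _ => this z, Finset.sum_ite_eq' Finset.univ (y ∘ ⇑τ)]
      simp only [Finset.mem_univ, if_true]
      refine if_congr ?_ rfl rfl
      have : (y ∘ ⇑τ) ∘ ⇑σ = y ∘ ⇑(τ * σ) := by
        funext i; simp [Equiv.Perm.mul_apply]
      rw [this]
    rw [Finset.sum_congr rfl fun τ _ => inner τ, cnt_eq_sum]
    exact Fintype.sum_equiv (Equiv.mulRight σ) _ _ fun τ => rfl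
  rw [Finset.sum_congr rfl fun σ _ => step σ, Finset.sum_const, smul_eq_mul]
  congr 1
  · rw [Finset.card_univ, Fintype.card_perm, Fintype.card_fin]
  · exact cnt_eq_sum x y

def rep (θ : Sym (Fin N) t) : Fin t → Fin N :=
  fun i => θ.1.toList.get (Fin.cast (by rw [Multiset.length_toList]; exact θ.2.symm) i)

lemma typeOf_rep (θ : Sym (Fin N) t) : typeOf (rep θ) = θ := by
  apply Subtype.ext
  show Multiset.map (rep θ) Finset.univ.val = θ.1
  have hlen : θ.1.toList.length = t := by rw [Multiset.length_toList]; exact θ.2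
  have h1 : Multiset.map (rep θ) Finset.univ.val = ↑(List.ofFn (rep θ)) := by
    simp [List.ofFn_eq_map, Finset.univ, Fintype.elems]
  rw [h1]
  have : List.ofFn (rep θ) = θ.1.toList := by
    apply List.ext_getElem
    · simp [hlen]
    · intro n h1 h2
      simp [rep]
      rfl
  rw [this, Multiset.coe_toList]

lemma cnt_trace (θ : Sym (Fin N) t) :
    ∑ x : Fin t → Fin N, (if typeOf x = θ then cnt x x else 0) = t.factorial := by
  have : ∀ x : Fin t → Fin N,
      (if typeOf x = θ then cnt x x else 0) = cnt x (rep θ) := by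
    intro x
    split
    · next h => exact (cnt_diag (by rw [typeOf_rep]; exact h)).symm
    · next h => exact (cnt_eq_zero (by rw [typeOf_rep]; exact h)).symm
  rw [Finset.sum_congr rfl fun x _ => this x, cnt_rowsum]


lemma tfac_ne : (t.factorial : ℂ) ≠ 0 := by
  exact_mod_cast Nat.cast_ne_zero.mpr (Nat.factorial_ne_zero t)

def P (N t : ℕ) (θ : Sym (Fin N) t) : Matrix (Fin t → Fin N) (Fin t → Fin N) ℂ :=
  Matrix.of fun x y => if typeOf x = θ then (cnt x y : ℂ) / (t.factorial : ℂ) else 0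

lemma P_apply (θ : Sym (Fin N) t) (x y : Fin t → Fin N) :
    P N t θ x y = if typeOf x = θ then (cnt x y : ℂ) / (t.factorial : ℂ) else 0 := rfl

lemma P_herm (θ : Sym (Fin N) t) : (P N t θ)ᴴ = P N t θ := by
  ext x y
  rw [Matrix.conjTranspose_apply, P_apply, P_apply]
  by_cases hx : typeOf x = θ <;> by_cases hy : typeOf y = θ
  · rw [if_pos hx, if_pos hy, cnt_symm y x]
    simp
  · rw [if_pos hx, if_neg hy]
    have h0 : cnt x y = 0 := cnt_eq_zero fun h => hy (h.symm.trans hx)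
    simp [h0]
  · rw [if_neg hx, if_pos hy]
    have h0 : cnt y x = 0 := cnt_eq_zero fun h => hx (h.symm.trans hy)
    simp [h0]
  · rw [if_neg hx, if_neg hy]
    simp

lemma P_mul (θ φ : Sym (Fin N) t) :
    P N t θ * P N t φ = if θ = φ then P N t θ else 0 := by
  ext x y
  rw [Matrix.mul_apply]
  by_cases hx : typeOf x = θ
  · by_cases hθφ : θ = φ
    · subst hθφ
      have hz : ∀ z : Fin t → Fin N,
          P N t θ x z * P N t θ z y =
            (if typeOf z = θ then ((cnt x z * cnt z y : ℕ) : ℂ) else 0)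
              / ((t.factorial : ℂ) * (t.factorial : ℂ)) := by
        intro z
        rw [P_apply, P_apply, if_pos hx]
        by_cases hzθ : typeOf z = θ
        · rw [if_pos hzθ, if_pos hzθ]
          push_cast
          ring
        · rw [if_neg hzθ, if_neg hzθ, mul_zero, zero_div]
      rw [Finset.sum_congr rfl fun z _ => hz z, ← Finset.sum_div]
      have : (∑ z : Fin t → Fin N,
          if typeOf z = θ then ((cnt x z * cnt z y : ℕ) : ℂ) else 0) =
          ((t.factorial * cnt x y : ℕ) : ℂ) := by
        rw [← cnt_conv x y]
        push_cast
        refine Finset.sum_congr rfl fun z _ => ?_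
        by_cases hzθ : typeOf z = θ
        · rw [if_pos hzθ]
        · rw [if_neg hzθ, cnt_eq_zero (fun h => hzθ (h ▸ hx)), Nat.cast_zero, zero_mul]
      rw [this, if_pos rfl, P_apply, if_pos hx]
      push_cast
      exact mul_div_mul_left _ _ tfac_ne
    · rw [if_neg hθφ]
      have hz : ∀ z : Fin t → Fin N, P N t θ x z * P N t φ z y = 0 := by
        intro z
        rw [P_apply, P_apply]
        by_cases hzφ : typeOf z = φ
        · rw [if_pos hx, if_pos hzφ,
            cnt_eq_zero (by rw [hx, hzφ]; exact fun h => hθφ h), Nat.cast_zero, zero_div, zero_mul]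
        · rw [if_neg hzφ, mul_zero]
      rw [Finset.sum_congr rfl fun z _ => hz z]
      simp
  · have hz : ∀ z : Fin t → Fin N, P N t θ x z * P N t φ z y = 0 := by
      intro z; rw [P_apply, if_neg hx, zero_mul]
    rw [Finset.sum_congr rfl fun z _ => hz z]
    by_cases hθφ : θ = φ
    · subst hθφ
      simp [P_apply, hx]
    · simp [hθφ]

lemma P_trace (θ : Sym (Fin N) t) : (P N t θ).trace = 1 := by
  rw [Matrix.trace]
  have hd : ∀ x : Fin t → Fin N, (P N t θ).diag x =
      ((if typeOf x = θ then cnt x x else 0 : ℕ) : ℂ) / (t.factorial : ℂ) := by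
    intro x
    rw [Matrix.diag_apply, P_apply]
    by_cases hx : typeOf x = θ <;> simp [hx]
  rw [Finset.sum_congr rfl fun x _ => hd x, ← Finset.sum_div, ← Nat.cast_sum, cnt_trace,
    div_self tfac_ne]

lemma symProj_eq : symProj (Fin N) t = ∑ θ : Sym (Fin N) t, P N t θ := by
  ext x y
  rw [symProj]
  simp only [Matrix.smul_apply, Matrix.sum_apply, Matrix.of_apply, P_apply]
  have h1 : (∑ σ : Equiv.Perm (Fin t), if x = y ∘ ⇑σ then (1:ℂ) else 0)
      = ((cnt x y : ℕ) : ℂ) := by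
    rw [cnt_eq_sum]
    push_cast
    rfl
  rw [h1, Finset.sum_ite_eq Finset.univ (typeOf x) fun _ => (cnt x y : ℂ) / (t.factorial : ℂ)]
  simp only [Finset.mem_univ, if_true, smul_eq_mul]
  rw [inv_mul_eq_div]

lemma mem_typeOf {x : Fin t → Fin N} {i : Fin N} : i ∈ typeOf x ↔ ∃ j, x j = i := by
  rw [typeOf, Sym.mem_mk]
  simp [List.mem_ofFn]

lemma supp_iff {x : Fin t → Fin N} {S : Finset (Fin N)} :
    (∀ i : Fin N, i ∈ typeOf x → i ∈ S) ↔ ∀ j, x j ∈ S := by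
  constructor
  · intro h j; exact h _ (mem_typeOf.mpr ⟨j, rfl⟩)
  · rintro h i hi
    obtain ⟨j, rfl⟩ := mem_typeOf.mp hi
    exact h j

lemma symProjOn_eq (S : Finset (Fin N)) :
    symProjOn S t = ∑ θ : Sym (Fin N) t,
      (if ∀ i : Fin N, i ∈ θ → i ∈ S then (1:ℂ) else 0) • P N t θ := by
  ext x y
  rw [symProjOn]
  simp only [Matrix.smul_apply, Matrix.sum_apply, Matrix.of_apply]
  have h1 : (∑ σ : Equiv.Perm (Fin t), if (∀ i, x i ∈ S) ∧ x = y ∘ ⇑σ then (1:ℂ) else 0)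
      = (if ∀ i, x i ∈ S then (1:ℂ) else 0) * ((cnt x y : ℕ) : ℂ) := by
    by_cases hS : ∀ i, x i ∈ S
    · rw [if_pos hS, one_mul, cnt_eq_sum]
      push_cast
      refine Finset.sum_congr rfl fun σ _ => ?_
      simp [hS]
    · rw [if_neg hS, zero_mul]
      refine Finset.sum_eq_zero fun σ _ => ?_
      simp [hS]
  rw [h1]
  have h2 : ∀ θ : Sym (Fin N) t,
      ((if ∀ i : Fin N, i ∈ θ → i ∈ S then (1:ℂ) else 0) • P N t θ x y)
      = if typeOf x = θ then
          (if ∀ i : Fin N, i ∈ θ → i ∈ S then (1:ℂ) else 0) * ((cnt x y : ℂ) / (t.factorial : ℂ))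
        else 0 := by
    intro θ
    rw [P_apply, smul_eq_mul]
    by_cases hx : typeOf x = θ <;> simp [hx]
  rw [Finset.sum_congr rfl fun θ _ => h2 θ,
    Finset.sum_ite_eq Finset.univ (typeOf x)]
  simp only [Finset.mem_univ, if_true, supp_iff, smul_eq_mul]
  by_cases hS : ∀ j, x j ∈ S
  · simp only [hS, if_pos, if_true]
    ring
  · simp [hS]

lemma diag_mul (a b : Sym (Fin N) t → ℂ) :
    (∑ θ : Sym (Fin N) t, a θ • P N t θ) * (∑ θ : Sym (Fin N) t, b θ • P N t θ)
      = ∑ θ : Sym (Fin N) t, (a θ * b θ) • P N t θ := by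
  rw [Finset.sum_mul_sum]
  refine Finset.sum_congr rfl fun θ _ => ?_
  have : ∀ φ : Sym (Fin N) t, (a θ • P N t θ) * (b φ • P N t φ)
      = if θ = φ then (a θ * b φ) • P N t θ else 0 := by
    intro φ
    rw [Matrix.smul_mul, Matrix.mul_smul, P_mul, smul_smul]
    by_cases h : θ = φ <;> simp [h]
  rw [Finset.sum_congr rfl fun φ _ => this φ, Finset.sum_ite_eq Finset.univ θ]
  simp

lemma diag_trace (a : Sym (Fin N) t → ℂ) :
    (∑ θ : Sym (Fin N) t, a θ • P N t θ).trace = ∑ θ : Sym (Fin N) t, a θ := by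
  rw [Matrix.trace_sum]
  refine Finset.sum_congr rfl fun θ _ => ?_
  rw [Matrix.trace_smul, P_trace, smul_eq_mul, mul_one]

lemma diag_herm (r : Sym (Fin N) t → ℝ) :
    (∑ θ : Sym (Fin N) t, ((r θ : ℝ) : ℂ) • P N t θ)ᴴ
      = ∑ θ : Sym (Fin N) t, ((r θ : ℝ) : ℂ) • P N t θ := by
  rw [Matrix.conjTranspose_sum]
  refine Finset.sum_congr rfl fun θ _ => ?_
  rw [Matrix.conjTranspose_smul, P_herm, Complex.star_def, Complex.conj_ofReal]


lemma traceNorm_diag (l : Sym (Fin N) t → ℝ) (X : Matrix (Fin t → Fin N) (Fin t → Fin N) ℂ)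
    (hX : X = ∑ θ : Sym (Fin N) t, ((l θ : ℝ) : ℂ) • P N t θ) :
    DT.traceNorm X = ∑ θ : Sym (Fin N) t, |l θ| := by
  subst hX
  have hR : (∑ θ : Sym (Fin N) t, ((Real.sqrt |l θ| : ℝ) : ℂ) • P N t θ)ᴴ *
        (∑ θ : Sym (Fin N) t, ((Real.sqrt |l θ| : ℝ) : ℂ) • P N t θ)
      = ∑ θ : Sym (Fin N) t, ((|l θ| : ℝ) : ℂ) • P N t θ := by
    rw [diag_herm, diag_mul]
    exact Finset.sum_congr rfl fun θ _ => by
      rw [← Complex.ofReal_mul, Real.mul_self_sqrt (abs_nonneg _)]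
  have hRpsd : (∑ θ : Sym (Fin N) t, ((|l θ| : ℝ) : ℂ) • P N t θ).PosSemidef :=
    hR ▸ Matrix.posSemidef_conjTranspose_mul_self _
  have hsq : (∑ θ : Sym (Fin N) t, ((|l θ| : ℝ) : ℂ) • P N t θ) ^ 2
      = (∑ θ : Sym (Fin N) t, ((l θ : ℝ) : ℂ) • P N t θ)ᴴ *
          (∑ θ : Sym (Fin N) t, ((l θ : ℝ) : ℂ) • P N t θ) := by
    rw [pow_two, diag_herm, diag_mul, diag_mul]
    exact Finset.sum_congr rfl fun θ _ => by
      rw [← Complex.ofReal_mul, ← Complex.ofReal_mul, abs_mul_abs_self]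
  open scoped MatrixOrder in
  have hsqrt : CFC.sqrt ((∑ θ : Sym (Fin N) t, ((l θ : ℝ) : ℂ) • P N t θ)ᴴ *
      (∑ θ : Sym (Fin N) t, ((l θ : ℝ) : ℂ) • P N t θ))
      = ∑ θ : Sym (Fin N) t, ((|l θ| : ℝ) : ℂ) • P N t θ :=
    CFC.sqrt_unique (by rw [← hsq, pow_two]) hRpsd.nonneg
  open scoped MatrixOrder in
  have hT : ∀ Y : Matrix (Fin t → Fin N) (Fin t → Fin N) ℂ,
      DT.traceNorm Y = (CFC.sqrt (Yᴴ * Y)).trace.re := by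
    intro Y
    rw [CFC.sqrt_eq_real_sqrt _ (Matrix.posSemidef_conjTranspose_mul_self _).nonneg, cfcₙ_eq_cfc,
      (Matrix.posSemidef_conjTranspose_mul_self Y).1.cfc_eq]
    rfl
  rw [hT, hsqrt, diag_trace, ← Complex.ofReal_sum, Complex.ofReal_re]

end Aux

open Classical in
/-- the Haar moment operator and the `D`-average of normalized projectors onto
`Sym^t(S)` commute, and their trace distance is the total-variation-type sum over all
size-`t` multisets (types). -/
theorem haar_vs_subset_symmetric_average (N t : ℕ) (hN : 1 ≤ N) (ht : 1 ≤ t)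
    (w : Finset (Fin N) → ℝ) (hw0 : ∀ S, 0 ≤ w S) (hw1 : (∑ S : Finset (Fin N), w S) = 1)
    (hsupp : ∀ S, w S ≠ 0 → S.Nonempty) :
    Commute (haarMoment (Fin N) t)
        (∑ S : Finset (Fin N), (w S : ℂ) • ((S.card + t - 1).choose t : ℂ)⁻¹ • symProjOn S t) ∧
      traceNorm
          (haarMoment (Fin N) t -
            ∑ S : Finset (Fin N), (w S : ℂ) • ((S.card + t - 1).choose t : ℂ)⁻¹ • symProjOn S t) =
        ∑ θ : Sym (Fin N) t,
          |((N + t - 1).choose t : ℝ)⁻¹ -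
            ∑ S : Finset (Fin N),
              w S * (if ∀ i : Fin N, i ∈ θ → i ∈ S then ((S.card + t - 1).choose t : ℝ)⁻¹
                else 0)| := by
  classical
  have hHaar : haarMoment (Fin N) t
      = ∑ θ : Sym (Fin N) t, (((N + t - 1).choose t : ℂ)⁻¹) • Aux.P N t θ := by
    rw [haarMoment, Fintype.card_fin, Aux.symProj_eq, Finset.smul_sum]
  have hG1 : ∀ S : Finset (Fin N),
      (w S : ℂ) • ((S.card + t - 1).choose t : ℂ)⁻¹ • symProjOn S t
      = ∑ θ : Sym (Fin N) t, ((w S : ℂ) *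
          (if ∀ i : Fin N, i ∈ θ → i ∈ S then ((S.card + t - 1).choose t : ℂ)⁻¹ else 0))
            • Aux.P N t θ := by
    intro S
    rw [Aux.symProjOn_eq S, Finset.smul_sum, Finset.smul_sum]
    refine Finset.sum_congr rfl fun θ _ => ?_
    rw [smul_smul, smul_smul]
    congr 1
    by_cases h : ∀ i : Fin N, i ∈ θ → i ∈ S <;> simp [h]
  have hG : (∑ S : Finset (Fin N),
        (w S : ℂ) • ((S.card + t - 1).choose t : ℂ)⁻¹ • symProjOn S t)
      = ∑ θ : Sym (Fin N) t, (∑ S : Finset (Fin N), (w S : ℂ) *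
          (if ∀ i : Fin N, i ∈ θ → i ∈ S then ((S.card + t - 1).choose t : ℂ)⁻¹ else 0))
            • Aux.P N t θ := by
    rw [Finset.sum_congr rfl fun S _ => hG1 S, Finset.sum_comm]
    exact Finset.sum_congr rfl fun θ _ => (Finset.sum_smul).symm
  have hD : haarMoment (Fin N) t -
      (∑ S : Finset (Fin N),
        (w S : ℂ) • ((S.card + t - 1).choose t : ℂ)⁻¹ • symProjOn S t)
      = ∑ θ : Sym (Fin N) t,
          ((((N + t - 1).choose t : ℝ)⁻¹ -
            ∑ S : Finset (Fin N),
              w S * (if ∀ i : Fin N, i ∈ θ → i ∈ S then ((S.card + t - 1).choose t : ℝ)⁻¹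
                else 0) : ℝ) : ℂ) • Aux.P N t θ := by
    rw [hHaar, hG, ← Finset.sum_sub_distrib]
    refine Finset.sum_congr rfl fun θ _ => ?_
    rw [← sub_smul]
    congr 1
    push_cast [apply_ite (fun r : ℝ => (r : ℂ))]
    ring
  constructor
  · rw [Commute, SemiconjBy, hHaar, hG, Aux.diag_mul, Aux.diag_mul]
    exact Finset.sum_congr rfl fun θ _ => by rw [mul_comm]
  · exact Aux.traceNorm_diag
      (fun θ => ((N + t - 1).choose t : ℝ)⁻¹ -
        ∑ S : Finset (Fin N),
          w S * (if ∀ i : Fin N, i ∈ θ → i ∈ S then ((S.card + t - 1).choose t : ℝ)⁻¹ else 0))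
      _ hD
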